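/- Let F be a field and let f, g, h be nonzero polynomials in F[x_1, ..., x_n] with f = g·h. Then mon(f) ≥ |V(P_f)| ≥ max{|V(P_g)|, |V(P_h)|}, where mon(f) is the sparsity of f and |V(P)| denotes the number of extreme points of a polytope P. -/

import Mathlib

open scoped Pointwise

/-- The Newton polytope of a polynomial `f ∈ F[x_1, ..., x_n]`: the convex hull in `ℝⁿ` of
the set of exponent vectors of monomials of `f` with nonzero coefficient. -/
noncomputable def newtonPolytope {F : Type*} [Field F] {n : ℕ}
    (f : MvPolynomial (Fin n) F) : Set (Fin n → ℝ) :=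
  convexHull ℝ ((fun m : Fin n →₀ ℕ => fun i : Fin n => (m i : ℝ)) ''
    (f.support : Set (Fin n →₀ ℕ)))

/-!
A vertex of `P_g + P_h` decomposes uniquely as a sum of points of `P_g` and `P_h`, so it is
`α + β` for a single pair of exponents of `g` and `h`, and the coefficient of `x^(α+β)` in `gh`
is the nonzero product of their coefficients; hence `P_gh = P_g + P_h` (Ostrowski). A vertex `a`
of a polytope `P` is exposed by a functional `ℓ`, and adding to `a` any vertex of the face of `Q`
on which `ℓ` is maximal gives a vertex of `P + Q`; by uniqueness of decompositions this is
injective in `a`. Finally every vertex of `P_f` is an exponent of `f`.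
-/

open Set

theorem ContinuousLinearMap.toExposed_add {𝕜 E : Type*} [TopologicalSpace 𝕜] [Ring 𝕜]
    [PartialOrder 𝕜] [IsOrderedRing 𝕜] [AddCommMonoid E] [TopologicalSpace E] [Module 𝕜 E]
    (l : StrongDual 𝕜 E) (A B : Set E) :
    l.toExposed (A + B) = l.toExposed A + l.toExposed B := by
  ext x
  constructor
  · rintro ⟨⟨a, ha, b, hb, rfl⟩, hmax⟩
    refine ⟨a, ⟨ha, fun a' ha' => ?_⟩, b, ⟨hb, fun b' hb' => ?_⟩, rfl⟩
    · simpa using hmax _ (add_mem_add ha' hb)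
    · simpa using hmax _ (add_mem_add ha hb')
  · rintro ⟨a, ⟨ha, hamax⟩, b, ⟨hb, hbmax⟩, rfl⟩
    refine ⟨add_mem_add ha hb, ?_⟩
    rintro _ ⟨a', ha', b', hb', rfl⟩
    simpa using add_le_add (hamax a' ha') (hbmax b' hb')

theorem eq_and_eq_of_add_mem_extremePoints_add {𝕜 E : Type*} [Field 𝕜] [LinearOrder 𝕜]
    [IsStrictOrderedRing 𝕜] [AddCommGroup E] [Module 𝕜 E] {P Q : Set E} {a a' b b' : E}
    (hv : a + b ∈ extremePoints 𝕜 (P + Q)) (ha : a ∈ P) (ha' : a' ∈ P) (hb : b ∈ Q)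
    (hb' : b' ∈ Q) (hab : a + b = a' + b') : a = a' ∧ b = b' := by
  have hmid : a + b ∈ openSegment 𝕜 (a + b') (a' + b) := by
    refine ⟨1 / 2, 1 / 2, by norm_num, by norm_num, by norm_num, ?_⟩
    rw [← smul_add, show a + b' + (a' + b) = (2 : 𝕜) • (a + b) by
      rw [two_smul]; nth_rewrite 2 [hab]; abel, smul_smul]
    norm_num
  have hbb' : a + b = a + b' := (hv.2 (add_mem_add ha hb') (add_mem_add ha' hb) hmid).symm
  obtain rfl := add_left_cancel hbb'
  exact ⟨add_right_cancel hab, rfl⟩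

section LocallyConvex

variable {E : Type*} [AddCommGroup E] [Module ℝ E] [TopologicalSpace E] [T2Space E]
  [IsTopologicalAddGroup E] [ContinuousSMul ℝ E] [LocallyConvexSpace ℝ E]

theorem Set.Finite.extremePoints_convexHull_subset_exposedPoints {A : Set E} (hA : A.Finite) :
    extremePoints ℝ (convexHull ℝ A) ⊆ exposedPoints ℝ (convexHull ℝ A) := by
  intro a ha
  set K := convexHull ℝ (A \ {a})
  have haK : a ∉ K := fun haK =>
    ((convex_convexHull ℝ A).mem_extremePoints_iff_mem_sdiff_convexHull_sdiff.1 ha).2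
      (convexHull_mono (sdiff_subset_sdiff_left (subset_convexHull ℝ A)) haK)
  obtain ⟨ℓ, u, hKu, hua⟩ := geometric_hahn_banach_closed_point (convex_convexHull ℝ _)
    (hA.sdiff.isCompact_convexHull (𝕜 := ℝ)).isClosed haK
  refine ⟨ha.1, ℓ, fun y hy => ?_⟩
  obtain hA₀ | hA₀ := (A \ {a}).eq_empty_or_nonempty
  · obtain rfl : y = a := convexHull_min (sdiff_eq_empty.1 hA₀) (convex_singleton a) hy
    simp
  have hyJ : y ∈ convexJoin ℝ {a} K := by
    rw [← convexHull_insert hA₀]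
    exact convexHull_mono (subset_insert_sdiff_singleton _ _) hy
  rw [convexJoin_singleton_left, mem_iUnion₂] at hyJ
  obtain ⟨q, hq, t, s, ht, hs, hts, rfl⟩ := hyJ
  have hqa : ℓ q < ℓ a := (hKu q hq).trans hua
  simp only [map_add, map_smul, smul_eq_mul]
  obtain rfl : t = 1 - s := by linarith
  have hgap := mul_le_mul_of_nonneg_left hqa.le hs
  refine ⟨by linarith, fun hle => ?_⟩
  obtain rfl : s = 0 := by nlinarith
  simp

theorem IsCompact.exists_add_mem_extremePoints_add {P Q : Set E} {a : E}
    (ha : a ∈ exposedPoints ℝ P) (hQ : IsCompact Q) (hQne : Q.Nonempty) :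
    ∃ b ∈ Q, a + b ∈ extremePoints ℝ (P + Q) := by
  obtain ⟨ℓ, hℓ⟩ := mem_exposedPoints_iff_exposed_singleton.1 ha (singleton_nonempty a)
  obtain ⟨b₀, hb₀, hb₀max⟩ := hQ.exists_isMaxOn hQne ℓ.continuous.continuousOn
  have hface : ℓ.toExposed (P + Q) = {a} + ℓ.toExposed Q := by
    rw [ℓ.toExposed_add, hℓ]; rfl
  obtain ⟨v, hv⟩ := (isCompact_singleton.add (ContinuousLinearMap.toExposed.isExposed.isCompact
    hQ)).extremePoints_nonempty (singleton_nonempty a |>.add ⟨b₀, hb₀, isMaxOn_iff.1 hb₀max⟩)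
  rw [← hface] at hv
  obtain ⟨_, rfl, b, hb, rfl⟩ := hface ▸ hv.1
  exact ⟨b, hb.1,
    ContinuousLinearMap.toExposed.isExposed.isExtreme.extremePoints_subset_extremePoints hv⟩

theorem Set.Finite.ncard_extremePoints_convexHull_le_add {A B : Set E} (hA : A.Finite)
    (hB : B.Finite) (hBne : B.Nonempty) :
    (extremePoints ℝ (convexHull ℝ A)).ncard ≤
      (extremePoints ℝ (convexHull ℝ A + convexHull ℝ B)).ncard := by
  have hpartner : ∀ a ∈ extremePoints ℝ (convexHull ℝ A),
      ∃ b ∈ convexHull ℝ B, a + b ∈ extremePoints ℝ (convexHull ℝ A + convexHull ℝ B) :=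
    fun a ha => (hB.isCompact_convexHull (𝕜 := ℝ)).exists_add_mem_extremePoints_add
      (hA.extremePoints_convexHull_subset_exposedPoints ha) hBne.convexHull
  choose! φ hφB hφext using hpartner
  have hfin : (extremePoints ℝ (convexHull ℝ A + convexHull ℝ B)).Finite :=
    (hA.add hB).subset <| by
      rw [← convexHull_add]; exact extremePoints_convexHull_subset
  refine ncard_le_ncard_of_injOn (fun a => a + φ a) hφext (fun a ha a' ha' h => ?_) hfin
  exact (eq_and_eq_of_add_mem_extremePoints_add (𝕜 := ℝ) (hφext a ha) ha.1 ha'.1 (hφB a ha)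
    (hφB a' ha') h).1

end LocallyConvex

noncomputable def exponentHom (σ : Type*) : (σ →₀ ℕ) →+ (σ → ℝ) where
  toFun m i := m i
  map_zero' := by ext; simp
  map_add' _ _ := by ext; simp

theorem exponentHom_injective (σ : Type*) : Function.Injective (exponentHom σ) :=
  fun _ _ h => Finsupp.ext fun i => Nat.cast_injective (R := ℝ) (congrFun h i)

theorem MvPolynomial.coeff_mul_add_of_uniqueAdd {R σ : Type*} [CommSemiring R]
    {f g : MvPolynomial σ R} {p q : σ →₀ ℕ} (h : UniqueAdd f.support g.support p q) :
    (f * g).coeff (p + q) = f.coeff p * g.coeff q :=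
  AddMonoidAlgebra.coeff_mul_add_of_uniqueAdd h

section NewtonPolytope

variable {F : Type*} [Field F] {n : ℕ}

theorem newtonPolytope_eq (p : MvPolynomial (Fin n) F) :
    newtonPolytope p = convexHull ℝ (exponentHom (Fin n) '' p.support) :=
  rfl

theorem finite_exponentHom_image_support (p : MvPolynomial (Fin n) F) :
    (exponentHom (Fin n) '' p.support).Finite :=
  p.support.finite_toSet.image _

theorem isCompact_newtonPolytope (p : MvPolynomial (Fin n) F) : IsCompact (newtonPolytope p) :=
  (finite_exponentHom_image_support p).isCompact_convexHull (𝕜 := ℝ)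

theorem exponentHom_mem_newtonPolytope {p : MvPolynomial (Fin n) F} {m : Fin n →₀ ℕ}
    (hm : m ∈ p.support) : exponentHom (Fin n) m ∈ newtonPolytope p :=
  subset_convexHull ℝ _ (mem_image_of_mem _ hm)

theorem ncard_extremePoints_newtonPolytope_le (p : MvPolynomial (Fin n) F) :
    (extremePoints ℝ (newtonPolytope p)).ncard ≤ p.support.card :=
  calc (extremePoints ℝ (newtonPolytope p)).ncard
      ≤ (exponentHom (Fin n) '' p.support).ncard :=
        ncard_le_ncard extremePoints_convexHull_subset (finite_exponentHom_image_support p)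
    _ ≤ (p.support : Set (Fin n →₀ ℕ)).ncard := ncard_image_le p.support.finite_toSet
    _ = p.support.card := ncard_coe_finset _

theorem uniqueAdd_of_mem_extremePoints_newtonPolytope_add {g h : MvPolynomial (Fin n) F}
    {p q : Fin n →₀ ℕ} (hp : p ∈ g.support) (hq : q ∈ h.support)
    (hv : exponentHom (Fin n) (p + q) ∈ extremePoints ℝ (newtonPolytope g + newtonPolytope h)) :
    UniqueAdd g.support h.support p q := by
  intro p' q' hp' hq' hpq
  rw [map_add] at hv
  obtain ⟨hpp', hqq'⟩ := eq_and_eq_of_add_mem_extremePoints_add hv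
    (exponentHom_mem_newtonPolytope hp) (exponentHom_mem_newtonPolytope hp')
    (exponentHom_mem_newtonPolytope hq) (exponentHom_mem_newtonPolytope hq')
    (by rw [← map_add, ← map_add, hpq])
  exact ⟨exponentHom_injective _ hpp'.symm, exponentHom_injective _ hqq'.symm⟩

theorem extremePoints_newtonPolytope_add_subset (g h : MvPolynomial (Fin n) F) :
    extremePoints ℝ (newtonPolytope g + newtonPolytope h) ⊆
      exponentHom (Fin n) '' (g * h).support := by
  intro v hv
  have hv' : v ∈ exponentHom (Fin n) '' g.support + exponentHom (Fin n) '' h.support := by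
    rw [newtonPolytope_eq, newtonPolytope_eq, ← convexHull_add] at hv
    exact extremePoints_convexHull_subset hv
  obtain ⟨_, ⟨p, hp, rfl⟩, _, ⟨q, hq, rfl⟩, rfl⟩ := mem_add.1 hv'
  rw [← map_add] at hv ⊢
  refine mem_image_of_mem _ (MvPolynomial.mem_support_iff.2 ?_)
  rw [MvPolynomial.coeff_mul_add_of_uniqueAdd
    (uniqueAdd_of_mem_extremePoints_newtonPolytope_add hp hq hv)]
  exact mul_ne_zero (MvPolynomial.mem_support_iff.1 hp) (MvPolynomial.mem_support_iff.1 hq)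

theorem newtonPolytope_mul (g h : MvPolynomial (Fin n) F) :
    newtonPolytope (g * h) = newtonPolytope g + newtonPolytope h := by
  refine subset_antisymm ?_ ?_
  · rw [newtonPolytope_eq, newtonPolytope_eq, newtonPolytope_eq, ← convexHull_add]
    refine convexHull_mono ?_
    rintro _ ⟨m, hm, rfl⟩
    obtain ⟨p, hp, q, hq, rfl⟩ := Finset.mem_add.1 (MvPolynomial.support_mul g h hm)
    rw [map_add]
    exact add_mem_add (mem_image_of_mem _ hp) (mem_image_of_mem _ hq)
  · rw [← closure_convexHull_extremePoints ((isCompact_newtonPolytope g).add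
      (isCompact_newtonPolytope h)) ((convex_convexHull ℝ _).add (convex_convexHull ℝ _))]
    exact closure_minimal (convexHull_min ((extremePoints_newtonPolytope_add_subset g h).trans
      (subset_convexHull ℝ _)) (convex_convexHull ℝ _)) (isCompact_newtonPolytope _).isClosed

end NewtonPolytope

theorem stmt6_general {F : Type*} [Field F] {n : ℕ} (f g h : MvPolynomial (Fin n) F)
    (hg : g ≠ 0) (hh : h ≠ 0) (hfgh : f = g * h) :
    max ((Set.extremePoints ℝ (newtonPolytope g)).ncard)
        ((Set.extremePoints ℝ (newtonPolytope h)).ncard) ≤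
      (Set.extremePoints ℝ (newtonPolytope f)).ncard ∧
    (Set.extremePoints ℝ (newtonPolytope f)).ncard ≤ f.support.card := by
  subst hfgh
  have hne : ∀ p : MvPolynomial (Fin n) F, p ≠ 0 → (exponentHom (Fin n) '' p.support).Nonempty :=
    fun p hp => (Finset.coe_nonempty.2 (MvPolynomial.support_nonempty.2 hp)).image _
  refine ⟨max_le ?_ ?_, ncard_extremePoints_newtonPolytope_le _⟩
  · rw [newtonPolytope_mul]
    exact (finite_exponentHom_image_support g).ncard_extremePoints_convexHull_le_add
      (finite_exponentHom_image_support h) (hne h hh)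
  · rw [newtonPolytope_mul, add_comm]
    exact (finite_exponentHom_image_support h).ncard_extremePoints_convexHull_le_add
      (finite_exponentHom_image_support g) (hne g hg)

/-- If `f = g * h` with `f, g, h` nonzero, then
`mon(f) ≥ |V(P_f)| ≥ max {|V(P_g)|, |V(P_h)|}`, where `mon(f)` is the sparsity of `f` and
`V(P)` is the set of extreme points (vertices) of the polytope `P`. -/
theorem stmt6 {F : Type*} [Field F] {n : ℕ} (f g h : MvPolynomial (Fin n) F)
    (hf : f ≠ 0) (hg : g ≠ 0) (hh : h ≠ 0) (hfgh : f = g * h) :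
    max ((Set.extremePoints ℝ (newtonPolytope g)).ncard)
        ((Set.extremePoints ℝ (newtonPolytope h)).ncard) ≤
      (Set.extremePoints ℝ (newtonPolytope f)).ncard ∧
    (Set.extremePoints ℝ (newtonPolytope f)).ncard ≤ f.support.card :=
  stmt6_general f g h hg hh hfgh
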